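/- Let M be a maximal independent set of the Kneser graph on chambers of PG(3,q). If there exist two distinct lines of M-weight (q+1)^2, then every line of a chamber of M passes through the intersection point of the two lines or lies in the plane spanned by them, and there are at least q+1 lines of M-weight (q+1)^2. -/

import Mathlib

open Submodule

/-- A chamber of `PG(3,q)`: a mutually incident point-line-plane triple,
where points, lines and planes are the 1-, 2- and 3-dimensional subspaces
of a 4-dimensional vector space over `F = GF(q)`. -/
structure Chamber (F : Type) [Field F] where
  pt : Submodule F (Fin 4 → F)
  line : Submodule F (Fin 4 → F)
  plane : Submodule F (Fin 4 → F)
  pt_rank : Module.finrank F pt = 1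
  line_rank : Module.finrank F line = 2
  plane_rank : Module.finrank F plane = 3
  pt_le_line : pt ≤ line
  line_le_plane : line ≤ plane

/-- Two chambers are opposite if each point lies outside the other's plane
and the two lines are skew (intersect trivially). -/
def Chamber.Opp {F : Type} [Field F] (c d : Chamber F) : Prop :=
  ¬ c.pt ≤ d.plane ∧ ¬ d.pt ≤ c.plane ∧ c.line ⊓ d.line = ⊥

/-- An independent set of the Kneser graph on chambers: pairwise non-opposite chambers. -/
def IsIndep {F : Type} [Field F] (M : Set (Chamber F)) : Prop :=
  ∀ c ∈ M, ∀ d ∈ M, ¬ c.Opp d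

/-- A maximal independent set of the Kneser graph on chambers. -/
def IsMaxIndep {F : Type} [Field F] (M : Set (Chamber F)) : Prop :=
  IsIndep M ∧ ∀ c : Chamber F, (∀ d ∈ M, ¬ c.Opp d) → c ∈ M

/-- The `M`-weight of a line `l`: the number of chambers of `M` whose line is `l`. -/
noncomputable def wLine {F : Type} [Field F] (M : Set (Chamber F))
    (l : Submodule F (Fin 4 → F)) : ℕ :=
  {c ∈ M | c.line = l}.ncard

/-- The `M`-weight of an incident line-plane pair. -/
noncomputable def wPair {F : Type} [Field F] (M : Set (Chamber F))
    (l π : Submodule F (Fin 4 → F)) : ℕ :=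
  {c ∈ M | c.line = l ∧ c.plane = π}.ncard

/-- The `M`-weight of an incident point-line pair. -/
noncomputable def wPt {F : Type} [Field F] (M : Set (Chamber F))
    (P l : Submodule F (Fin 4 → F)) : ℕ :=
  {c ∈ M | c.pt = P ∧ c.line = l}.ncard

/-- A `π`-line of `M`: a line of weight `≠ (q+1)^2` lying in a plane `π` such that
the pair `(l, π)` has weight `q+1`. -/
def IsPiLine {F : Type} [Field F] [Fintype F] (M : Set (Chamber F))
    (l : Submodule F (Fin 4 → F)) : Prop :=
  Module.finrank F l = 2 ∧ wLine M l ≠ (Fintype.card F + 1)^2 ∧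
    ∃ π : Submodule F (Fin 4 → F), Module.finrank F π = 3 ∧ l ≤ π ∧ wPair M l π = Fintype.card F + 1

/-- A `P`-line of `M`: a line of weight `≠ (q+1)^2` through a point `P` such that
the pair `(P, l)` has weight `q+1`. -/
def IsPLine {F : Type} [Field F] [Fintype F] (M : Set (Chamber F))
    (l : Submodule F (Fin 4 → F)) : Prop :=
  Module.finrank F l = 2 ∧ wLine M l ≠ (Fintype.card F + 1)^2 ∧
    ∃ P : Submodule F (Fin 4 → F), Module.finrank F P = 1 ∧ P ≤ l ∧ wPt M P l = Fintype.card F + 1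

/-!
A line has weight `(q+1)^2` exactly when all `(q+1)^2` chambers on it lie in `M`; so if the
line of some `c ∈ M` were skew to such a line `l`, a suitable chamber on `l` would be opposite
to `c`. Hence every line of `M` meets both `l₁` and `l₂`, and a line meeting two intersecting
lines passes through their common point `P` or lies in their plane `π`. Conversely, a line `l`
with `P ≤ l ≤ π` meets every line of `M`, so maximality puts all chambers on `l` into `M`: the
`q+1` lines of this pencil all have weight `(q+1)^2`.
-/

open Module

section Counting

variable {K V : Type*} [Field K] [AddCommGroup V] [Module K V]

theorem finrank_map_mkQ_add_finrank [FiniteDimensional K V] {p U : Submodule K V} (h : p ≤ U) :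
    finrank K (U.map p.mkQ) + finrank K p = finrank K U := by
  have := LinearMap.finrank_range_add_finrank_ker (p.mkQ.comp U.subtype)
  rwa [LinearMap.range_comp, range_subtype, LinearMap.ker_comp, ker_mkQ,
    (comapSubtypeEquivOfLe h).finrank_eq] at this

theorem finrank_comap_mkQ [FiniteDimensional K V] (p : Submodule K V) (X : Submodule K (V ⧸ p)) :
    finrank K (X.comap p.mkQ) = finrank K X + finrank K p := by
  rw [← finrank_map_mkQ_add_finrank (le_comap_mkQ p X),
    map_comap_eq_of_surjective p.mkQ_surjective]

variable [Fintype K]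

theorem card_points_of_finrank_eq_two {W : Submodule K V} (hW : finrank K W = 2) :
    Nat.card {P : Submodule K V // finrank K P = 1 ∧ P ≤ W} = Fintype.card K + 1 := by
  have e : {H : Submodule K W // finrank K H = 1} ≃
      {P : Submodule K V // finrank K P = 1 ∧ P ≤ W} :=
    { toFun := fun H => ⟨H.1.map W.subtype, by rw [finrank_map_subtype_eq, H.2],
        map_subtype_le W H.1⟩
      invFun := fun P => ⟨P.1.comap W.subtype, by
        rw [(comapSubtypeEquivOfLe P.2.2).finrank_eq, P.2.1]⟩
      left_inv := fun H => Subtype.ext (comap_map_eq_of_injective W.injective_subtype H.1)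
      right_inv := fun P => Subtype.ext ((map_comap_subtype W P.1).trans (inf_eq_right.2 P.2.2)) }
  rw [← Nat.card_congr e, ← Nat.card_congr (Projectivization.equivSubmodule K W),
    Projectivization.card_of_finrank_two K W hW, Nat.card_eq_fintype_card]

theorem card_finrank_eq_succ_between [FiniteDimensional K V] {p W : Submodule K V} {k : ℕ}
    (hp : finrank K p = k) (hpW : p ≤ W) (hW : finrank K W = k + 2) :
    Nat.card {U : Submodule K V // finrank K U = k + 1 ∧ p ≤ U ∧ U ≤ W} =
      Fintype.card K + 1 := by
  have hW' : finrank K (W.map p.mkQ) = 2 := by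
    have := finrank_map_mkQ_add_finrank hpW
    omega
  have e : {X : Submodule K (V ⧸ p) // finrank K X = 1 ∧ X ≤ W.map p.mkQ} ≃
      {U : Submodule K V // finrank K U = k + 1 ∧ p ≤ U ∧ U ≤ W} :=
    { toFun := fun X => ⟨X.1.comap p.mkQ, by rw [finrank_comap_mkQ, X.2.1, hp, add_comm],
        le_comap_mkQ p X.1, by
          simpa only [comap_map_mkQ, sup_eq_right.2 hpW] using comap_mono (f := p.mkQ) X.2.2⟩
      invFun := fun U => ⟨U.1.map p.mkQ, by
          have := finrank_map_mkQ_add_finrank U.2.2.1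
          omega,
        map_mono U.2.2.2⟩
      left_inv := fun X => Subtype.ext (map_comap_eq_of_surjective p.mkQ_surjective X.1)
      right_inv := fun U => Subtype.ext ((comap_map_mkQ p U.1).trans (sup_eq_right.2 U.2.2.1)) }
  rw [← Nat.card_congr e, card_points_of_finrank_eq_two hW']

end Counting

section Incidence

variable {K V : Type*} [Field K] [AddCommGroup V] [Module K V]

theorem exists_finrank_eq_one_le_not_le {A B : Submodule K V} (h : ¬ A ≤ B) :
    ∃ P : Submodule K V, finrank K P = 1 ∧ P ≤ A ∧ ¬ P ≤ B := by
  obtain ⟨v, hvA, hvB⟩ := SetLike.not_le_iff_exists.mp h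
  have hv : v ≠ 0 := fun h0 => hvB (h0 ▸ B.zero_mem)
  exact ⟨K ∙ v, finrank_span_singleton hv, (span_singleton_le_iff_mem v A).2 hvA,
    fun hle => hvB (hle (mem_span_singleton_self v))⟩

variable [FiniteDimensional K V]

theorem exists_hyperplane_ge_not_le {l P : Submodule K V} (h : ¬ P ≤ l) :
    ∃ π : Submodule K V, finrank K π + 1 = finrank K V ∧ l ≤ π ∧ ¬ P ≤ π := by
  obtain ⟨v, hvP, hvl⟩ := SetLike.not_le_iff_exists.mp h
  obtain ⟨f, hfv, hfl⟩ := l.exists_dual_map_eq_bot_of_notMem hvl inferInstance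
  have hf : f ≠ 0 := fun h0 => hfv (by rw [h0, LinearMap.zero_apply])
  exact ⟨LinearMap.ker f, Module.Dual.finrank_ker_add_one_of_ne_zero hf,
    LinearMap.le_ker_iff_map.2 hfl, fun hle => hfv (hle hvP)⟩

theorem inf_ne_bot_of_finrank_lt_add {l m π : Submodule K V} (hl : l ≤ π) (hm : m ≤ π)
    (h : finrank K π < finrank K l + finrank K m) : l ⊓ m ≠ ⊥ := by
  intro hbot
  have hdim := finrank_sup_add_finrank_inf_eq l m
  have hsup := finrank_mono (sup_le hl hm)
  rw [hbot, finrank_bot] at hdim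
  omega

theorem finrank_inf_eq_one_of_ne {l₁ l₂ : Submodule K V} (h₁ : finrank K l₁ = 2)
    (h₂ : finrank K l₂ = 2) (hne : l₁ ≠ l₂) (hmeet : l₁ ⊓ l₂ ≠ ⊥) :
    finrank K ↥(l₁ ⊓ l₂) = 1 := by
  have hlt : l₁ ⊓ l₂ < l₁ := inf_le_left.lt_of_ne fun h =>
    hne (eq_of_le_of_finrank_le (inf_eq_left.1 h) (by rw [h₁, h₂]))
  have := finrank_lt_finrank_of_lt hlt
  have := one_le_finrank_iff.2 hmeet
  omega

theorem inf_le_or_le_sup_of_inf_ne_bot {m l₁ l₂ : Submodule K V} (hm : finrank K m = 2)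
    (hP : finrank K ↥(l₁ ⊓ l₂) = 1) (h₁ : m ⊓ l₁ ≠ ⊥) (h₂ : m ⊓ l₂ ≠ ⊥) :
    l₁ ⊓ l₂ ≤ m ∨ m ≤ l₁ ⊔ l₂ := by
  refine or_iff_not_imp_left.2 fun hPm => ?_
  have hdisj : (m ⊓ l₁) ⊓ (m ⊓ l₂) = ⊥ := by
    rw [← inf_inf_distrib_left, inf_comm]
    exact ((isAtom_iff_finrank_eq_one.2 hP).not_le_iff_disjoint.1 hPm).eq_bot
  have hdim := finrank_sup_add_finrank_inf_eq (m ⊓ l₁) (m ⊓ l₂)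
  rw [hdisj, finrank_bot] at hdim
  have hspan : m ⊓ l₁ ⊔ m ⊓ l₂ = m := eq_of_le_of_finrank_le (sup_le inf_le_left inf_le_left) (by
    have := one_le_finrank_iff.2 h₁
    have := one_le_finrank_iff.2 h₂
    omega)
  calc m = m ⊓ l₁ ⊔ m ⊓ l₂ := hspan.symm
    _ ≤ l₁ ⊔ l₂ := sup_le_sup inf_le_right inf_le_right

end Incidence

section Chambers

variable {F : Type} [Field F]

instance [Fintype F] : Finite (Chamber F) :=
  Finite.of_injective (fun c : Chamber F => (c.pt, c.line, c.plane)) <| by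
    rintro ⟨⟩ ⟨⟩ ⟨⟩
    rfl

theorem Chamber.pt_ne_bot (c : Chamber F) : c.pt ≠ ⊥ :=
  one_le_finrank_iff.1 c.pt_rank.ge

theorem Chamber.card_line_eq [Fintype F] {l : Submodule F (Fin 4 → F)} (hl : finrank F l = 2) :
    Nat.card {c : Chamber F // c.line = l} = (Fintype.card F + 1) ^ 2 := by
  have e : {c : Chamber F // c.line = l} ≃
      {P : Submodule F (Fin 4 → F) // finrank F P = 1 ∧ P ≤ l} ×
        {π : Submodule F (Fin 4 → F) // finrank F π = 2 + 1 ∧ l ≤ π ∧ π ≤ ⊤} :=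
    { toFun := fun c => (⟨c.1.pt, c.1.pt_rank, c.1.pt_le_line.trans_eq c.2⟩,
        ⟨c.1.plane, c.1.plane_rank, c.2.symm.trans_le c.1.line_le_plane, le_top⟩)
      invFun := fun x => ⟨⟨x.1.1, l, x.2.1, x.1.2.1, hl, x.2.2.1, x.1.2.2, x.2.2.2.1⟩, rfl⟩
      left_inv := by rintro ⟨c, rfl⟩; rfl
      right_inv := fun x => rfl }
  rw [Nat.card_congr e, Nat.card_prod, card_points_of_finrank_eq_two hl,
    card_finrank_eq_succ_between hl le_top (by rw [finrank_top, finrank_fin_fun]), sq]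

theorem wLine_eq_sq_iff [Fintype F] (M : Set (Chamber F)) {l : Submodule F (Fin 4 → F)}
    (hl : finrank F l = 2) :
    wLine M l = (Fintype.card F + 1) ^ 2 ↔ ∀ c : Chamber F, c.line = l → c ∈ M := by
  have hall : {c : Chamber F | c.line = l}.ncard = (Fintype.card F + 1) ^ 2 := by
    rw [← Nat.card_coe_set_eq]
    exact Chamber.card_line_eq hl
  have hsub : {c ∈ M | c.line = l} ⊆ {c | c.line = l} := fun c hc => hc.2
  rw [wLine, ← hall]
  refine ⟨fun hw c hc => ?_, fun h => ?_⟩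
  · exact ((Set.ext_iff.1 (Set.eq_of_subset_of_ncard_le hsub hw.ge) c).2 hc).1
  · congr
    ext c
    exact ⟨And.right, fun hc => ⟨h c hc, hc⟩⟩

theorem IsIndep.line_inf_ne_bot {M : Set (Chamber F)} (hM : IsIndep M)
    {l : Submodule F (Fin 4 → F)} (hl : finrank F l = 2)
    (hfull : ∀ d : Chamber F, d.line = l → d ∈ M) {c : Chamber F} (hc : c ∈ M) :
    c.line ⊓ l ≠ ⊥ := by
  intro hskew
  have hl_plane : ¬ l ≤ c.plane := fun hle => inf_ne_bot_of_finrank_lt_add c.line_le_plane hle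
    (by rw [c.plane_rank, c.line_rank, hl]; norm_num) hskew
  obtain ⟨P, hP, hPl, hPc⟩ := exists_finrank_eq_one_le_not_le hl_plane
  have hpt : ¬ c.pt ≤ l := fun hle => c.pt_ne_bot (le_bot_iff.1 (hskew ▸ le_inf c.pt_le_line hle))
  obtain ⟨π, hπ, hlπ, hptπ⟩ := exists_hyperplane_ge_not_le hpt
  rw [finrank_fin_fun] at hπ
  exact hM c hc ⟨P, l, π, hP, hl, by omega, hPl, hlπ⟩ (hfull _ rfl) ⟨hptπ, hPc, hskew⟩

theorem IsMaxIndep.mem_of_forall_line_inf_ne_bot {M : Set (Chamber F)} (hM : IsMaxIndep M)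
    {d : Chamber F} (h : ∀ c ∈ M, d.line ⊓ c.line ≠ ⊥) : d ∈ M :=
  hM.2 d fun c hc hopp => h c hc hopp.2.2

theorem IsMaxIndep.mem_of_pencil {M : Set (Chamber F)} (hM : IsMaxIndep M)
    {P π : Submodule F (Fin 4 → F)} (hP : P ≠ ⊥) (hπ : finrank F π = 3)
    (hcover : ∀ c ∈ M, P ≤ c.line ∨ c.line ≤ π) {d : Chamber F} (hPd : P ≤ d.line)
    (hdπ : d.line ≤ π) : d ∈ M :=
  hM.mem_of_forall_line_inf_ne_bot fun c hc => (hcover c hc).elim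
    (fun hPc hbot => hP (le_bot_iff.1 (hbot ▸ le_inf hPd hPc)))
    (fun hcπ => inf_ne_bot_of_finrank_lt_add hdπ hcπ <| by
      rw [hπ, d.line_rank, c.line_rank]; norm_num)

end Chambers

/-- If two distinct lines have `M`-weight `(q+1)^2`, then the line of every chamber
of `M` passes through their intersection point or lies in their common plane, and
there are at least `q+1` lines of weight `(q+1)^2`. -/
theorem two_big_lines {F : Type} [Field F] [Fintype F] {q : ℕ}
    (hq : Fintype.card F = q)
    (M : Set (Chamber F)) (hM : IsMaxIndep M)
    (l₁ l₂ : Submodule F (Fin 4 → F))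
    (h₁ : Module.finrank F l₁ = 2) (h₂ : Module.finrank F l₂ = 2)
    (hne : l₁ ≠ l₂)
    (hw₁ : wLine M l₁ = (q + 1)^2) (hw₂ : wLine M l₂ = (q + 1)^2) :
    (∀ c ∈ M, l₁ ⊓ l₂ ≤ c.line ∨ c.line ≤ l₁ ⊔ l₂) ∧
    q + 1 ≤ {l : Submodule F (Fin 4 → F) |
      Module.finrank F l = 2 ∧ wLine M l = (q + 1)^2}.ncard := by
  subst hq
  have hfull₁ := (wLine_eq_sq_iff M h₁).1 hw₁
  have hfull₂ := (wLine_eq_sq_iff M h₂).1 hw₂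
  have hmeet : l₁ ⊓ l₂ ≠ ⊥ := by
    obtain ⟨c, hc, rfl⟩ := Set.nonempty_of_ncard_ne_zero (s := {c ∈ M | c.line = l₁})
      (by rw [← wLine, hw₁]; positivity)
    exact hM.1.line_inf_ne_bot h₂ hfull₂ hc
  have hP := finrank_inf_eq_one_of_ne h₁ h₂ hne hmeet
  have hπ : finrank F ↥(l₁ ⊔ l₂) = 3 := by
    have := finrank_sup_add_finrank_inf_eq l₁ l₂
    omega
  have hcover : ∀ c ∈ M, l₁ ⊓ l₂ ≤ c.line ∨ c.line ≤ l₁ ⊔ l₂ := fun c hc =>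
    inf_le_or_le_sup_of_inf_ne_bot c.line_rank hP (hM.1.line_inf_ne_bot h₁ hfull₁ hc)
      (hM.1.line_inf_ne_bot h₂ hfull₂ hc)
  refine ⟨hcover, ?_⟩
  calc Fintype.card F + 1
      = {l : Submodule F (Fin 4 → F) | finrank F l = 1 + 1 ∧ l₁ ⊓ l₂ ≤ l ∧ l ≤ l₁ ⊔ l₂}.ncard := by
        rw [← Nat.card_coe_set_eq]
        exact (card_finrank_eq_succ_between hP (inf_le_left.trans le_sup_left) hπ).symm
    _ ≤ _ := Set.ncard_le_ncard <| by
        rintro l ⟨hl, hPl, hlπ⟩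
        exact ⟨hl, (wLine_eq_sq_iff M hl).2 fun d hd =>
          hM.mem_of_pencil hmeet hπ hcover (hd ▸ hPl) (hd ▸ hlπ)⟩
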